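/- arXiv:1912.12705 — 3 statements merged into one kernel-verified Lean document; each statement's English description precedes it below -/
import Mathlib

section
/- Let B be a building set on [n+1] and S ∈ B. Then the contraction B/S = {T ⊆ [n+1] \ S : T ∈ B or T ⊔ S ∈ B} is a building set on the vertex set [n+1] \ S. -/
/-- The contraction `B/S = {T ⊆ [n+1] \ S : T ∈ B or T ⊔ S ∈ B}` of a building
set `B` on `[n+1]` by an element `S ∈ B` is a building set on `[n+1] \ S`. -/
theorem stmt4 (n : ℕ) (B : Set (Finset (Fin (n + 1))))
    (hne : ∀ T ∈ B, T.Nonempty)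
    (hsing : ∀ i : Fin (n + 1), ({i} : Finset (Fin (n + 1))) ∈ B)
    (hunion : ∀ S₁ ∈ B, ∀ S₂ ∈ B, (S₁ ∩ S₂).Nonempty → S₁ ∪ S₂ ∈ B)
    (S : Finset (Fin (n + 1))) (hS : S ∈ B) :
    (∀ T ∈ {T : Finset (Fin (n + 1)) |
        T.Nonempty ∧ T ⊆ Sᶜ ∧ (T ∈ B ∨ T ∪ S ∈ B)}, T.Nonempty ∧ T ⊆ Sᶜ) ∧
    (∀ i ∈ Sᶜ, ({i} : Finset (Fin (n + 1))) ∈ {T : Finset (Fin (n + 1)) |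
        T.Nonempty ∧ T ⊆ Sᶜ ∧ (T ∈ B ∨ T ∪ S ∈ B)}) ∧
    (∀ T₁ ∈ {T : Finset (Fin (n + 1)) |
        T.Nonempty ∧ T ⊆ Sᶜ ∧ (T ∈ B ∨ T ∪ S ∈ B)},
     ∀ T₂ ∈ {T : Finset (Fin (n + 1)) |
        T.Nonempty ∧ T ⊆ Sᶜ ∧ (T ∈ B ∨ T ∪ S ∈ B)},
      (T₁ ∩ T₂).Nonempty → T₁ ∪ T₂ ∈ {T : Finset (Fin (n + 1)) |
        T.Nonempty ∧ T ⊆ Sᶜ ∧ (T ∈ B ∨ T ∪ S ∈ B)}) := by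
  refine ⟨fun T hT => ⟨hT.1, hT.2.1⟩, ?_, ?_⟩
  · intro i hi
    exact ⟨Finset.singleton_nonempty i, Finset.singleton_subset_iff.2 hi, Or.inl (hsing i)⟩
  · rintro T₁ ⟨hT₁ne, hT₁s, hT₁⟩ T₂ ⟨hT₂ne, hT₂s, hT₂⟩ hint
    refine ⟨hT₁ne.mono Finset.subset_union_left, Finset.union_subset hT₁s hT₂s, ?_⟩
    rcases hT₁ with h1 | h1 <;> rcases hT₂ with h2 | h2
    · exact Or.inl (hunion _ h1 _ h2 hint)
    · refine Or.inr ?_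
      have : T₁ ∪ (T₂ ∪ S) ∈ B := by
        refine hunion _ h1 _ h2 ?_
        obtain ⟨x, hx⟩ := hint
        simp only [Finset.mem_inter] at hx
        exact ⟨x, by simp [hx.1, hx.2]⟩
      simpa [Finset.union_assoc] using this
    · refine Or.inr ?_
      have : T₂ ∪ (T₁ ∪ S) ∈ B := by
        refine hunion _ h2 _ h1 ?_
        obtain ⟨x, hx⟩ := hint
        simp only [Finset.mem_inter] at hx
        exact ⟨x, by simp [hx.1, hx.2]⟩
      have e : T₂ ∪ (T₁ ∪ S) = T₁ ∪ T₂ ∪ S := by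
        rw [Finset.union_comm T₁ T₂, Finset.union_assoc]
      rwa [e] at this
    · refine Or.inr ?_
      have : (T₁ ∪ S) ∪ (T₂ ∪ S) ∈ B := by
        refine hunion _ h1 _ h2 ?_
        obtain ⟨s, hs⟩ := hne S hS
        exact ⟨s, Finset.mem_inter.2 ⟨Finset.mem_union_right _ hs, Finset.mem_union_right _ hs⟩⟩
      have e : (T₁ ∪ S) ∪ (T₂ ∪ S) = T₁ ∪ T₂ ∪ S := by
        ext x; simp [Finset.mem_union]; tauto
      rwa [e] at this
end

section
/- Every element of B₂(P,n) ∪ B₃(P,n) can be written as a disjoint union S₁ ⊔ S₂ with S₁, S₂ ∈ B(P,n), where B(P,n) = B₁(P,n) ∪ B₂(P,n) ∪ B₃(P,n) ∪ {[n+1]}. -/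
/-- The singletons of `[n+1] = {1,…,n+1}`. -/
def B₁P (n : ℕ) : Set (Finset ℕ) := {S | ∃ i ∈ Finset.Icc 1 (n + 1), S = {i}}

/-- `B₂(P,n) = {{1,2} ∪ T : T ⊆ {3,…,n+1}}`. -/
def B₂P (n : ℕ) : Set (Finset ℕ) :=
  {S | ∃ T ⊆ Finset.Icc 3 (n + 1), S = {1, 2} ∪ T}

/-- `B₃(P,n) = {{1} ∪ T : ∅ ≠ T ⊆ {3,…,n}}`. -/
def B₃P (n : ℕ) : Set (Finset ℕ) :=
  {S | ∃ T ⊆ Finset.Icc 3 n, T.Nonempty ∧ S = insert 1 T}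

/-- `B(P,n) = B₁(P,n) ∪ B₂(P,n) ∪ B₃(P,n) ∪ {[n+1]}`. -/
def BP (n : ℕ) : Set (Finset ℕ) :=
  B₁P n ∪ B₂P n ∪ B₃P n ∪ {Finset.Icc 1 (n + 1)}

lemma singleton_mem_BP (n i : ℕ) (h1 : 1 ≤ i) (h2 : i ≤ n + 1) : ({i} : Finset ℕ) ∈ BP n := by
  left; left; left; exact ⟨i, Finset.mem_Icc.mpr ⟨h1, h2⟩, rfl⟩

/-- Every element of `B₂(P,n) ∪ B₃(P,n)` is a disjoint union of two elements
of `B(P,n)` (the flagness criterion for the nestohedron `P_{B(P,n)}`). -/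
theorem stmt8 (n : ℕ) (hn : 2 ≤ n) :
    ∀ S ∈ B₂P n ∪ B₃P n, ∃ S₁ S₂ : Finset ℕ,
      S₁ ∈ BP n ∧ S₂ ∈ BP n ∧ Disjoint S₁ S₂ ∧ S = S₁ ∪ S₂ := by
  intro S hS
  rcases hS with h2 | h3
  · obtain ⟨T, hT, rfl⟩ := h2
    have hT' : ∀ t ∈ T, 3 ≤ t ∧ t ≤ n + 1 := fun t ht => Finset.mem_Icc.mp (hT ht)
    rcases eq_or_ne T ∅ with rfl | hne
    · refine ⟨{1}, {2}, singleton_mem_BP n 1 le_rfl (by omega),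
        singleton_mem_BP n 2 (by omega) (by omega), ?_, ?_⟩
      · simp
      · ext x; simp [or_assoc]
    · by_cases hmem : n + 1 ∈ T
      · refine ⟨{n+1}, {1,2} ∪ T.erase (n+1), singleton_mem_BP n (n+1) (by omega) le_rfl,
          ?_, ?_, ?_⟩
        · left; left; right
          exact ⟨T.erase (n+1), (Finset.erase_subset _ _).trans hT, rfl⟩
        · rw [Finset.disjoint_left]
          intro x hx hx'
          simp only [Finset.mem_singleton] at hx
          subst hx
          simp only [Finset.mem_union, Finset.mem_insert, Finset.mem_singleton,
            Finset.mem_erase] at hx'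
          rcases hx' with (h | h) | ⟨h, _⟩ <;> omega
        · ext x
          simp only [Finset.mem_union, Finset.mem_insert, Finset.mem_singleton,
            Finset.mem_erase]
          constructor
          · rintro ((h | h) | h)
            · tauto
            · tauto
            · by_cases hx : x = n + 1 <;> tauto
          · rintro (h | (h | h) | ⟨_, h⟩) <;> first | (subst h; tauto) | tauto
      · refine ⟨{2}, insert 1 T, singleton_mem_BP n 2 (by omega) (by omega), ?_, ?_, ?_⟩
        · left; right
          refine ⟨T, fun t ht => ?_, Finset.nonempty_iff_ne_empty.mpr hne, rfl⟩
          have := hT' t ht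
          have : t ≠ n + 1 := fun h => hmem (h ▸ ht)
          exact Finset.mem_Icc.mpr (by omega)
        · rw [Finset.disjoint_left]
          intro x hx hx'
          simp only [Finset.mem_singleton] at hx
          subst hx
          simp only [Finset.mem_insert] at hx'
          rcases hx' with h | h
          · omega
          · have := hT' 2 h; omega
        · ext x
          simp only [Finset.mem_union, Finset.mem_insert, Finset.mem_singleton]
          tauto
  · obtain ⟨T, hT, ⟨t, ht⟩, rfl⟩ := h3
    have hT' : ∀ s ∈ T, 3 ≤ s ∧ s ≤ n := fun s hs => Finset.mem_Icc.mp (hT hs)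
    have htt := hT' t ht
    by_cases h : T = {t}
    · subst h
      refine ⟨{1}, {t}, singleton_mem_BP n 1 le_rfl (by omega),
        singleton_mem_BP n t (by omega) (by omega), ?_, ?_⟩
      · simp; omega
      · ext x; simp [or_comm]
    · refine ⟨{t}, insert 1 (T.erase t), singleton_mem_BP n t (by omega) (by omega),
        ?_, ?_, ?_⟩
      · left; right
        refine ⟨T.erase t, (Finset.erase_subset _ _).trans hT, ?_, rfl⟩
        obtain ⟨s, hs, hst⟩ : ∃ s ∈ T, s ≠ t := by
          by_contra hc
          push_neg at hc
          exact h (Finset.eq_singleton_iff_unique_mem.mpr ⟨ht, fun x hx => hc x hx⟩)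
        exact ⟨s, Finset.mem_erase.mpr ⟨hst, hs⟩⟩
      · rw [Finset.disjoint_left]
        intro x hx hx'
        simp only [Finset.mem_singleton] at hx
        subst hx
        simp only [Finset.mem_insert, Finset.mem_erase] at hx'
        rcases hx' with h' | ⟨h', _⟩
        · omega
        · exact h' rfl
      · ext x
        simp only [Finset.mem_union, Finset.mem_insert, Finset.mem_singleton,
          Finset.mem_erase]
        constructor
        · rintro (h' | h')
          · tauto
          · by_cases hx : x = t <;> tauto
        · rintro (h' | h' | ⟨_, h'⟩) <;> first | (subst h'; tauto) | tauto
end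

section
/- For the building set B = B(P,n) on [n+1] (n ≥ 3) and the element S_t = {1,2,n+1} ∪ {3,...,t} ∈ B for 2 ≤ t ≤ n−1, the restriction B|_{S_t} is isomorphic, under the order-preserving bijection S_t → [t+1] sending 1↦1, 2↦2, i↦i−0 for 3 ≤ i ≤ t and n+1 ↦ t+1, to the building set B(P,t) on [t+1]. -/
/-- For `2 ≤ t ≤ n - 1`, the element `S_t = {1,2,n+1} ∪ {3,…,t}` belongs to
`B(P,n)`, and the order-preserving relabelling sending `n+1 ↦ t+1` and fixing
the other elements of `S_t` carries the restriction `B(P,n)|_{S_t}` onto the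
building set `B(P,t)` on `[t+1]`. -/
theorem stmt13 (n t : ℕ) (hn : 3 ≤ n) (ht : 2 ≤ t) (htn : t ≤ n - 1) :
    (insert (n + 1) ({1, 2} ∪ Finset.Icc 3 t) ∈ BP n) ∧
    (Finset.image (fun i => if i = n + 1 then t + 1 else i)) ''
        {T | T ∈ BP n ∧ T ⊆ insert (n + 1) ({1, 2} ∪ Finset.Icc 3 t)}
      = BP t := by
  have htn' : t + 1 ≤ n := by omega
  set f : ℕ → ℕ := fun i => if i = n + 1 then t + 1 else i with hf
  have f_of_ne : ∀ x, x ≠ n + 1 → f x = x := by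
    intro x hx; simp [hf, hx]
  have f_top : f (n + 1) = t + 1 := by simp [hf]
  set St : Finset ℕ := insert (n + 1) ({1, 2} ∪ Finset.Icc 3 t) with hSt
  have memSt : ∀ x, x ∈ St ↔ x = 1 ∨ x = 2 ∨ (3 ≤ x ∧ x ≤ t) ∨ x = n + 1 := by
    intro x
    simp only [hSt, Finset.mem_insert, Finset.mem_union, Finset.mem_Icc,
      Finset.mem_singleton]
    omega
  constructor
  · -- St ∈ BP n
    left; left; right
    refine ⟨insert (n + 1) (Finset.Icc 3 t), ?_, ?_⟩
    · intro x hx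
      simp only [Finset.mem_insert, Finset.mem_Icc] at hx ⊢
      omega
    · ext x
      simp only [hSt, Finset.mem_insert, Finset.mem_union, Finset.mem_Icc]
      tauto
  · ext S
    simp only [Set.mem_image, Set.mem_setOf_eq]
    constructor
    · rintro ⟨T, ⟨hTB, hTS⟩, rfl⟩
      rcases hTB with ((h1 | h2) | h3) | h4
      · -- singleton
        obtain ⟨i, hi, rfl⟩ := h1
        have hiSt : i ∈ St := hTS (by simp)
        rw [memSt] at hiSt
        left; left; left
        refine ⟨f i, ?_, by rw [Finset.image_singleton]⟩
        simp only [Finset.mem_Icc]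
        by_cases hi' : i = n + 1
        · rw [hi', f_top]; omega
        · rw [f_of_ne i hi']; omega
      · -- B₂ case
        obtain ⟨T', hT', rfl⟩ := h2
        left; left; right
        refine ⟨T'.image f, ?_, ?_⟩
        · intro y hy
          simp only [Finset.mem_image] at hy
          obtain ⟨x, hx, rfl⟩ := hy
          have hx1 : x ∈ Finset.Icc 3 (n + 1) := hT' hx
          have hx2 : x ∈ St := hTS (Finset.mem_union_right _ hx)
          rw [memSt] at hx2
          simp only [Finset.mem_Icc] at hx1 ⊢
          by_cases hx' : x = n + 1
          · rw [hx', f_top]; omega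
          · rw [f_of_ne x hx']; omega
        · rw [Finset.image_union]
          congr 1
          have : ({1, 2} : Finset ℕ) = insert 1 {2} := rfl
          rw [this, Finset.image_insert, Finset.image_singleton,
            f_of_ne 1 (by omega), f_of_ne 2 (by omega)]
      · -- B₃ case
        obtain ⟨T', hT', hne, rfl⟩ := h3
        left; right
        have himg : (insert 1 T').image f = insert 1 T' := by
          rw [Finset.image_congr (g := id), Finset.image_id]
          intro x hx
          simp only [Finset.mem_coe, Finset.mem_insert] at hx
          have : x ≠ n + 1 := by
            rcases hx with rfl | hx
            · omega
            · have := hT' hx; simp only [Finset.mem_Icc] at this; omega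
          exact f_of_ne x this
        rw [himg]
        refine ⟨T', ?_, hne, rfl⟩
        intro x hx
        have hx1 := hT' hx
        have hx2 : x ∈ St := hTS (Finset.mem_insert_of_mem hx)
        rw [memSt] at hx2
        simp only [Finset.mem_Icc] at hx1 ⊢
        omega
      · -- full set: impossible
        exfalso
        simp only [Set.mem_singleton_iff] at h4
        subst h4
        have : n ∈ St := hTS (by simp only [Finset.mem_Icc]; omega)
        rw [memSt] at this
        omega
    · intro hS
      rcases hS with ((h1 | h2) | h3) | h4
      · -- singleton
        obtain ⟨i, hi, rfl⟩ := h1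
        simp only [Finset.mem_Icc] at hi
        by_cases hi' : i = t + 1
        · refine ⟨{n + 1}, ⟨?_, ?_⟩, ?_⟩
          · left; left; left
            exact ⟨n + 1, by simp only [Finset.mem_Icc]; omega, rfl⟩
          · intro x hx
            simp only [Finset.mem_singleton] at hx
            rw [memSt]; omega
          · rw [Finset.image_singleton, f_top, hi']
        · refine ⟨{i}, ⟨?_, ?_⟩, ?_⟩
          · left; left; left
            exact ⟨i, by simp only [Finset.mem_Icc]; omega, rfl⟩
          · intro x hx
            simp only [Finset.mem_singleton] at hx
            subst hx
            rw [memSt]; omega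
          · rw [Finset.image_singleton, f_of_ne i (by omega)]
      · -- B₂
        obtain ⟨T, hT, rfl⟩ := h2
        set g : ℕ → ℕ := fun j => if j = t + 1 then n + 1 else j with hg
        refine ⟨{1, 2} ∪ T.image g, ⟨?_, ?_⟩, ?_⟩
        · left; left; right
          refine ⟨T.image g, ?_, rfl⟩
          intro y hy
          simp only [Finset.mem_image] at hy
          obtain ⟨x, hx, rfl⟩ := hy
          have := hT hx
          simp only [Finset.mem_Icc] at this ⊢
          by_cases hx' : x = t + 1 <;> simp [hg, hx'] <;> omega
        · intro x hx
          simp only [Finset.mem_union, Finset.mem_insert, Finset.mem_singleton,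
            Finset.mem_image] at hx
          rw [memSt]
          rcases hx with (rfl | rfl) | ⟨y, hy, rfl⟩
          · omega
          · omega
          · have := hT hy
            simp only [Finset.mem_Icc] at this
            by_cases hy' : y = t + 1 <;> simp [hg, hy'] <;> omega
        · rw [Finset.image_union, Finset.image_image]
          congr 1
          · have : ({1, 2} : Finset ℕ) = insert 1 {2} := rfl
            rw [this, Finset.image_insert, Finset.image_singleton,
              f_of_ne 1 (by omega), f_of_ne 2 (by omega)]
          · rw [Finset.image_congr (g := id), Finset.image_id]
            intro x hx
            have := hT hx
            simp only [Finset.mem_Icc] at this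
            simp only [Function.comp_apply, id_eq]
            by_cases hx' : x = t + 1
            · simp [hg, hf, hx']
            · have hxn : x ≠ n + 1 := by omega
              simp [hg, hf, hx', hxn]
      · -- B₃
        obtain ⟨T, hT, hne, rfl⟩ := h3
        refine ⟨insert 1 T, ⟨?_, ?_⟩, ?_⟩
        · left; right
          refine ⟨T, ?_, hne, rfl⟩
          intro x hx
          have := hT hx
          simp only [Finset.mem_Icc] at this ⊢
          omega
        · intro x hx
          simp only [Finset.mem_insert] at hx
          rw [memSt]
          rcases hx with rfl | hx
          · omega
          · have := hT hx; simp only [Finset.mem_Icc] at this; omega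
        · rw [Finset.image_congr (g := id), Finset.image_id]
          intro x hx
          simp only [Finset.mem_coe, Finset.mem_insert] at hx
          have : x ≠ n + 1 := by
            rcases hx with rfl | hx
            · omega
            · have := hT hx; simp only [Finset.mem_Icc] at this; omega
          exact f_of_ne x this
      · -- full set Icc 1 (t+1)
        simp only [Set.mem_singleton_iff] at h4
        subst h4
        refine ⟨St, ⟨?_, le_refl _⟩, ?_⟩
        · left; left; right
          refine ⟨insert (n + 1) (Finset.Icc 3 t), ?_, ?_⟩
          · intro x hx
            simp only [Finset.mem_insert, Finset.mem_Icc] at hx ⊢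
            omega
          · ext x
            simp only [hSt, Finset.mem_insert, Finset.mem_union, Finset.mem_Icc]
            tauto
        · ext y
          simp only [Finset.mem_image, Finset.mem_Icc]
          constructor
          · rintro ⟨x, hx, rfl⟩
            rw [memSt] at hx
            rcases hx with rfl | rfl | hx | rfl
            · rw [f_of_ne 1 (by omega)]; omega
            · rw [f_of_ne 2 (by omega)]; omega
            · rw [f_of_ne x (by omega)]; omega
            · rw [f_top]; omega
          · intro hy
            by_cases hy' : y = t + 1
            · exact ⟨n + 1, (memSt _).mpr (by omega), by rw [f_top, hy']⟩
            · exact ⟨y, (memSt _).mpr (by omega), f_of_ne y (by omega)⟩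
end
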